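/- arXiv:0708.2525 — 3 statements merged into one kernel-verified Lean document; each statement's English description precedes it below -/
import Mathlib

section
/- Let Ξ̃(Z) be the set of Z×Z integer matrices A = (a_{ij})_{i,j∈ℤ} with finite support whose off-diagonal entries are nonnegative. For A ∈ Ξ̃(Z) and integers i ≠ j define σ_{i,j}(A) = Σ_{s≤i, t≥j} a_{s,t} if i < j, and σ_{i,j}(A) = Σ_{s≥i, t≤j} a_{s,t} if i > j. Define B ≼ A iff σ_{i,j}(B) ≤ σ_{i,j}(A) for all i ≠ j. Then ≼ is a partial order on the set of matrices in Ξ̃(Z) with fixed row sums and column sums; in particular, if B ≼ A and A ≼ B and A, B have the same row sums and column sums, then A = B. -/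
open scoped BigOperators Classical

private lemma finsum_ite_eq_sum' (C : ℤ × ℤ → ℤ) (s : Finset (ℤ × ℤ))
    (h : Function.support C ⊆ ↑s) (P : ℤ × ℤ → Prop) [DecidablePred P] :
    ∑ᶠ p : ℤ × ℤ, (if P p then C p else 0) = ∑ p ∈ s, (if P p then C p else 0) := by
  apply finsum_eq_sum_of_support_subset
  intro p hp
  apply h
  simp only [Function.mem_support] at hp ⊢
  intro hC
  apply hp
  split <;> simp [hC]

private lemma extract_up (C : ℤ × ℤ → ℤ) (s : Finset (ℤ × ℤ))
    (h : Function.support C ⊆ ↑s) (i j : ℤ) :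
    C (i, j) =
      (∑ p ∈ s, if p.1 ≤ i ∧ j ≤ p.2 then C p else 0)
      - (∑ p ∈ s, if p.1 ≤ i - 1 ∧ j ≤ p.2 then C p else 0)
      - (∑ p ∈ s, if p.1 ≤ i ∧ j + 1 ≤ p.2 then C p else 0)
      + (∑ p ∈ s, if p.1 ≤ i - 1 ∧ j + 1 ≤ p.2 then C p else 0) := by
  rw [← Finset.sum_sub_distrib, ← Finset.sum_sub_distrib, ← Finset.sum_add_distrib]
  have key : ∀ p ∈ s, ((if p.1 ≤ i ∧ j ≤ p.2 then C p else 0)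
      - (if p.1 ≤ i - 1 ∧ j ≤ p.2 then C p else 0)
      - (if p.1 ≤ i ∧ j + 1 ≤ p.2 then C p else 0)
      + (if p.1 ≤ i - 1 ∧ j + 1 ≤ p.2 then C p else 0))
      = (if p = (i, j) then C p else 0) := by
    rintro ⟨a, b⟩ _
    simp only [Prod.mk.injEq]
    generalize C (a, b) = c
    split_ifs <;> omega
  rw [Finset.sum_congr rfl key, Finset.sum_ite_eq' s (i, j) C]
  split_ifs with hmem
  · rfl
  · by_contra hne
    exact hmem (h (Function.mem_support.2 fun h0 => hne (h0 ▸ rfl)))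

private lemma extract_down (C : ℤ × ℤ → ℤ) (s : Finset (ℤ × ℤ))
    (h : Function.support C ⊆ ↑s) (i j : ℤ) :
    C (i, j) =
      (∑ p ∈ s, if i ≤ p.1 ∧ p.2 ≤ j then C p else 0)
      - (∑ p ∈ s, if i + 1 ≤ p.1 ∧ p.2 ≤ j then C p else 0)
      - (∑ p ∈ s, if i ≤ p.1 ∧ p.2 ≤ j - 1 then C p else 0)
      + (∑ p ∈ s, if i + 1 ≤ p.1 ∧ p.2 ≤ j - 1 then C p else 0) := by
  rw [← Finset.sum_sub_distrib, ← Finset.sum_sub_distrib, ← Finset.sum_add_distrib]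
  have key : ∀ p ∈ s, ((if i ≤ p.1 ∧ p.2 ≤ j then C p else 0)
      - (if i + 1 ≤ p.1 ∧ p.2 ≤ j then C p else 0)
      - (if i ≤ p.1 ∧ p.2 ≤ j - 1 then C p else 0)
      + (if i + 1 ≤ p.1 ∧ p.2 ≤ j - 1 then C p else 0))
      = (if p = (i, j) then C p else 0) := by
    rintro ⟨a, b⟩ _
    simp only [Prod.mk.injEq]
    generalize C (a, b) = c
    split_ifs <;> omega
  rw [Finset.sum_congr rfl key, Finset.sum_ite_eq' s (i, j) C]
  split_ifs with hmem
  · rfl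
  · by_contra hne
    exact hmem (h (Function.mem_support.2 fun h0 => hne (h0 ▸ rfl)))

/-- the relation `≼` defined via the quantities `σ_{i,j}` is a partial order
on matrices in `Ξ̃(ℤ)` with fixed row and column sums; in particular it is antisymmetric:
`B ≼ A`, `A ≼ B` with the same row and column sums forces `A = B`. -/
theorem stmt_2
    (A B : ℤ × ℤ → ℤ)
    (hA : (Function.support A).Finite) (hB : (Function.support B).Finite)
    (hApos : ∀ p : ℤ × ℤ, p.1 ≠ p.2 → 0 ≤ A p)
    (hBpos : ∀ p : ℤ × ℤ, p.1 ≠ p.2 → 0 ≤ B p)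
    (hrow : ∀ i : ℤ, ∑ᶠ j : ℤ, A (i, j) = ∑ᶠ j : ℤ, B (i, j))
    (hcol : ∀ j : ℤ, ∑ᶠ i : ℤ, A (i, j) = ∑ᶠ i : ℤ, B (i, j)) :
    let σ : (ℤ × ℤ → ℤ) → ℤ → ℤ → ℤ := fun C i j =>
      if i < j then ∑ᶠ p : ℤ × ℤ, (if p.1 ≤ i ∧ j ≤ p.2 then C p else 0)
      else ∑ᶠ p : ℤ × ℤ, (if i ≤ p.1 ∧ p.2 ≤ j then C p else 0)
    (∀ i j : ℤ, i ≠ j → σ B i j ≤ σ A i j) →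
    (∀ i j : ℤ, i ≠ j → σ A i j ≤ σ B i j) → A = B := by
  intro σ h1 h2
  have hσ : ∀ i j : ℤ, i ≠ j → σ A i j = σ B i j :=
    fun i j h => le_antisymm (h2 i j h) (h1 i j h)
  classical
  set s := (hA.union hB).toFinset with hs
  have hAs : Function.support A ⊆ ↑s := by
    intro p hp; simp [hs]; left; exact hp
  have hBs : Function.support B ⊆ ↑s := by
    intro p hp; simp [hs]; right; exact hp
  -- equality of the upper finite sums when i < j
  have hup : ∀ i j : ℤ, i < j →
      (∑ p ∈ s, if p.1 ≤ i ∧ j ≤ p.2 then A p else 0)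
        = (∑ p ∈ s, if p.1 ≤ i ∧ j ≤ p.2 then B p else 0) := by
    intro i j hij
    have := hσ i j (ne_of_lt hij)
    simp only [σ, if_pos hij] at this
    rwa [finsum_ite_eq_sum' A s hAs, finsum_ite_eq_sum' B s hBs] at this
  have hdown : ∀ i j : ℤ, j < i →
      (∑ p ∈ s, if i ≤ p.1 ∧ p.2 ≤ j then A p else 0)
        = (∑ p ∈ s, if i ≤ p.1 ∧ p.2 ≤ j then B p else 0) := by
    intro i j hij
    have := hσ i j (ne_of_gt hij)
    simp only [σ, if_neg (not_lt.2 hij.le)] at this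
    rwa [finsum_ite_eq_sum' A s hAs, finsum_ite_eq_sum' B s hBs] at this
  -- off-diagonal entries agree
  have hoff : ∀ i j : ℤ, i ≠ j → A (i, j) = B (i, j) := by
    intro i j hij
    rcases lt_or_gt_of_ne hij with hlt | hgt
    · rw [extract_up A s hAs i j, extract_up B s hBs i j,
        hup i j hlt, hup (i - 1) j (by omega), hup i (j + 1) (by omega),
        hup (i - 1) (j + 1) (by omega)]
    · rw [extract_down A s hAs i j, extract_down B s hBs i j,
        hdown i j hgt, hdown (i + 1) j (by omega), hdown i (j - 1) (by omega),
        hdown (i + 1) (j - 1) (by omega)]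
  -- diagonal entries agree via row sums
  have hdiag : ∀ i : ℤ, A (i, i) = B (i, i) := by
    intro i
    set t := insert i (s.image Prod.snd) with ht
    have hAt : ∑ᶠ j : ℤ, A (i, j) = ∑ j ∈ t, A (i, j) := by
      apply finsum_eq_sum_of_support_subset
      intro j hj
      have : (i, j) ∈ s := hAs hj
      exact Finset.mem_insert_of_mem (Finset.mem_image.2 ⟨(i, j), this, rfl⟩)
    have hBt : ∑ᶠ j : ℤ, B (i, j) = ∑ j ∈ t, B (i, j) := by
      apply finsum_eq_sum_of_support_subset
      intro j hj
      have : (i, j) ∈ s := hBs hj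
      exact Finset.mem_insert_of_mem (Finset.mem_image.2 ⟨(i, j), this, rfl⟩)
    have hsum : ∑ j ∈ t, A (i, j) = ∑ j ∈ t, B (i, j) := by
      rw [← hAt, ← hBt]; exact hrow i
    have hi : i ∈ t := Finset.mem_insert_self _ _
    rw [← Finset.add_sum_erase t _ hi, ← Finset.add_sum_erase t _ hi] at hsum
    have hrest : ∑ j ∈ t.erase i, A (i, j) = ∑ j ∈ t.erase i, B (i, j) :=
      Finset.sum_congr rfl fun j hj =>
        hoff i j fun hh => (Finset.ne_of_mem_erase hj) hh.symm
    rw [hrest] at hsum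
    exact add_right_cancel hsum
  funext p
  rcases p with ⟨i, j⟩
  by_cases h : i = j
  · subst h; exact hdiag i
  · exact hoff i j h
end

section
/- Fix an indeterminate v over ℚ and n ≥ 1, r ≥ 0. For λ ∈ Λ([-n,n],r) and j ∈ ℕ^{[-n,n-1]} let ⟨λ,j⟩ = Σ_{i=-n}^{n-1} λ_i j_i. Then the square matrix ( v^{⟨λ,j⟩} ) indexed by λ ∈ Λ_{n,r,A} and j ∈ Λ'_{n,r,A} (for A the zero matrix, i.e. λ ranging over all compositions of r on [-n,n] and j over all j ∈ ℕ^{[-n,n-1]} with σ(j) ≤ r) has nonzero determinant in ℚ(v). -/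
open scoped BigOperators Classical

/-- Inner product of two natural tuples. -/
private def ipnat {d : ℕ} (a b : Fin d → ℕ) : ℕ := ∑ i, a i * b i

private lemma two_ipnat_le {d : ℕ} (a b : Fin d → ℕ) :
    2 * ipnat a b ≤ ipnat a a + ipnat b b := by
  unfold ipnat
  rw [Finset.mul_sum, ← Finset.sum_add_distrib]
  refine Finset.sum_le_sum fun i _ => ?_
  have h : (2 * ((a i : ℤ) * b i)) ≤ (a i : ℤ) * a i + (b i : ℤ) * b i := by
    nlinarith [sq_nonneg ((a i : ℤ) - b i)]
  exact_mod_cast h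

private lemma two_ipnat_lt {d : ℕ} (a b : Fin d → ℕ) (hab : a ≠ b) :
    2 * ipnat a b < ipnat a a + ipnat b b := by
  obtain ⟨i, hi⟩ := Function.ne_iff.mp hab
  unfold ipnat
  rw [Finset.mul_sum, ← Finset.sum_add_distrib]
  refine Finset.sum_lt_sum (fun j _ => ?_) ⟨i, Finset.mem_univ i, ?_⟩
  · have h : (2 * ((a j : ℤ) * b j)) ≤ (a j : ℤ) * a j + (b j : ℤ) * b j := by
      nlinarith [sq_nonneg ((a j : ℤ) - b j)]
    exact_mod_cast h
  · have hne : ((a i : ℤ) - b i) ≠ 0 := by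
      intro h
      exact hi (by exact_mod_cast sub_eq_zero.mp h)
    have hpos : 0 < ((a i : ℤ) - b i) * ((a i : ℤ) - b i) := mul_self_pos.mpr hne
    have h : (2 * ((a i : ℤ) * b i)) < (a i : ℤ) * a i + (b i : ℤ) * b i := by nlinarith
    exact_mod_cast h

private lemma sum_ipnat_lt {ι : Type*} [Fintype ι] {d : ℕ} (w : ι → Fin d → ℕ)
    (hw : Function.Injective w) (τ : Equiv.Perm ι) (hτ : τ ≠ 1) :
    ∑ m, ipnat (w (τ m)) (w m) < ∑ m, ipnat (w m) (w m) := by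
  have hne : ∃ m, τ m ≠ m := by
    by_contra h
    push_neg at h
    exact hτ (Equiv.ext h)
  obtain ⟨m0, hm0⟩ := hne
  have h2 : 2 * ∑ m, ipnat (w (τ m)) (w m) < 2 * ∑ m, ipnat (w m) (w m) := by
    calc 2 * ∑ m, ipnat (w (τ m)) (w m) = ∑ m, 2 * ipnat (w (τ m)) (w m) := by
          rw [Finset.mul_sum]
    _ < ∑ m, (ipnat (w (τ m)) (w (τ m)) + ipnat (w m) (w m)) :=
        Finset.sum_lt_sum (fun m _ => two_ipnat_le _ _)
          ⟨m0, Finset.mem_univ _, two_ipnat_lt _ _ (fun h => hm0 (hw h))⟩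
    _ = ∑ m, ipnat (w (τ m)) (w (τ m)) + ∑ m, ipnat (w m) (w m) := Finset.sum_add_distrib
    _ = ∑ m, ipnat (w m) (w m) + ∑ m, ipnat (w m) (w m) := by
        rw [Equiv.sum_comp τ (fun m => ipnat (w m) (w m))]
    _ = 2 * ∑ m, ipnat (w m) (w m) := (two_mul _).symm
  omega

/-- Determinant of the "power matrix" is nonzero over ℚ[X]. -/
private lemma det_pow_matrix_ne_zero {ι : Type*} [Fintype ι] [DecidableEq ι] {d : ℕ}
    (f g : ι → Fin d → ℕ) (hg : Function.Injective g) (σ0 : Equiv.Perm ι)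
    (hfg : ∀ m, f (σ0 m) = g m) :
    (Matrix.of fun l m : ι => (Polynomial.X : Polynomial ℚ) ^ (ipnat (f l) (g m))).det ≠ 0 := by
  set N := ∑ m, ipnat (g m) (g m) with hN
  have hE : ∀ σ : Equiv.Perm ι, σ ≠ σ0 → ∑ m, ipnat (f (σ m)) (g m) < N := by
    intro σ hσ
    have hτ : (σ.trans σ0.symm) ≠ 1 := by
      intro h
      apply hσ
      ext m
      have := congrArg (fun e : Equiv.Perm ι => σ0 (e m)) h
      simpa using this
    have hrw : ∀ m, f (σ m) = g ((σ.trans σ0.symm) m) := by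
      intro m
      have := hfg (σ0.symm (σ m))
      simpa using this
    calc ∑ m, ipnat (f (σ m)) (g m) = ∑ m, ipnat (g ((σ.trans σ0.symm) m)) (g m) := by
          refine Finset.sum_congr rfl fun m _ => ?_
          rw [hrw m]
    _ < N := sum_ipnat_lt g hg _ hτ
  have hE0 : ∑ m, ipnat (f (σ0 m)) (g m) = N := by
    refine Finset.sum_congr rfl fun m _ => ?_
    rw [hfg m]
  have hcoeff :
      ((Matrix.of fun l m : ι =>
        (Polynomial.X : Polynomial ℚ) ^ (ipnat (f l) (g m))).det).coeff N
        = ((Equiv.Perm.sign σ0 : ℤ) : ℚ) := by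
    rw [Matrix.det_apply']
    rw [Polynomial.finset_sum_coeff]
    have hterm : ∀ σ : Equiv.Perm ι,
        (((Equiv.Perm.sign σ : ℤ) : Polynomial ℚ) *
          ∏ i, (Matrix.of fun l m : ι =>
            (Polynomial.X : Polynomial ℚ) ^ (ipnat (f l) (g m))) (σ i) i).coeff N
        = if (∑ m, ipnat (f (σ m)) (g m)) = N then ((Equiv.Perm.sign σ : ℤ) : ℚ) else 0 := by
      intro σ
      have hprod : (∏ i, (Matrix.of fun l m : ι =>
          (Polynomial.X : Polynomial ℚ) ^ (ipnat (f l) (g m))) (σ i) i)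
          = (Polynomial.X : Polynomial ℚ) ^ (∑ m, ipnat (f (σ m)) (g m)) := by
        simp only [Matrix.of_apply]
        rw [Finset.prod_pow_eq_pow_sum]
      rw [hprod]
      rw [show ((Equiv.Perm.sign σ : ℤ) : Polynomial ℚ)
          = Polynomial.C ((Equiv.Perm.sign σ : ℤ) : ℚ) from (Polynomial.C_eq_intCast _).symm]
      rw [Polynomial.coeff_C_mul, Polynomial.coeff_X_pow]
      by_cases h : (∑ m, ipnat (f (σ m)) (g m)) = N
      · simp [h]
      · have : N ≠ ∑ m, ipnat (f (σ m)) (g m) := fun hh => h hh.symm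
        simp [this, h]
    rw [Finset.sum_congr rfl (fun σ _ => hterm σ)]
    rw [Finset.sum_eq_single σ0]
    · simp [hE0]
    · intro σ _ hσ
      have := hE σ hσ
      simp [Nat.ne_of_lt' ?_]
      · intro h
        omega
    · intro h
      exact absurd (Finset.mem_univ σ0) h
  intro h
  rw [h] at hcoeff
  simp only [Polynomial.coeff_zero] at hcoeff
  rcases Int.units_eq_one_or (Equiv.Perm.sign σ0) with hs | hs <;> rw [hs] at hcoeff <;>
    norm_num at hcoeff

/-- the matrix `(v^{⟨λ,j⟩})`, for `λ` ranging over compositions of `r` into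
`2n+1` parts and `j` over tuples in `ℕ^{2n}` of total sum `≤ r`, has nonzero determinant
over `ℚ(v)` (for every identification of the two equinumerous index sets). -/
theorem stmt_4 (n r : ℕ) (hn : 1 ≤ n) :
    let L : Finset (Fin (2*n+1) → ℕ) := Finset.Nat.antidiagonalTuple (2*n+1) r
    let Jset : Finset (Fin (2*n) → ℕ) :=
      (Finset.range (r+1)).biUnion (fun k => Finset.Nat.antidiagonalTuple (2*n) k)
    L.card = Jset.card ∧
    ∀ φ : {x // x ∈ L} ≃ {x // x ∈ Jset},
      Matrix.det (Matrix.of (fun l m : {x // x ∈ L} =>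
        (RatFunc.X : RatFunc ℚ) ^
          (∑ i : Fin (2*n), (l : Fin (2*n+1) → ℕ) (Fin.castSucc i) * ((φ m : Fin (2*n) → ℕ) i))))
        ≠ 0 := by
  intro L Jset
  have hL : ∀ l : Fin (2*n+1) → ℕ, l ∈ L ↔ ∑ i, l i = r := by
    intro l
    exact Finset.Nat.mem_antidiagonalTuple
  have hJ : ∀ j : Fin (2*n) → ℕ, j ∈ Jset ↔ ∑ i, j i ≤ r := by
    intro j
    simp only [Jset, Finset.mem_biUnion, Finset.mem_range, Finset.Nat.mem_antidiagonalTuple]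
    constructor
    · rintro ⟨k, hk, rfl⟩
      omega
    · intro h
      exact ⟨∑ i, j i, by omega, rfl⟩
  have hsum : ∀ l : Fin (2*n+1) → ℕ,
      ∑ i, l i = (∑ i : Fin (2*n), l (Fin.castSucc i)) + l (Fin.last (2*n)) :=
    fun l => Fin.sum_univ_castSucc l
  -- the canonical bijection between the two index sets
  let equivF : {x // x ∈ L} ≃ {x // x ∈ Jset} :=
  { toFun := fun l => ⟨fun i => l.1 (Fin.castSucc i), by
      rw [hJ]
      have h1 := (hL l.1).mp l.2
      rw [hsum l.1] at h1
      omega⟩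
    invFun := fun j => ⟨Fin.snoc j.1 (r - ∑ i, j.1 i), by
      rw [hL, hsum]
      have h1 := (hJ j.1).mp j.2
      simp only [Fin.snoc_castSucc, Fin.snoc_last]
      omega⟩
    left_inv := by
      intro l
      apply Subtype.ext
      funext i
      dsimp only
      induction i using Fin.lastCases with
      | last =>
        rw [Fin.snoc_last]
        have h1 := (hL l.1).mp l.2
        rw [hsum l.1] at h1
        omega
      | cast i =>
        exact Fin.snoc_castSucc _ _ _
    right_inv := by
      intro j
      apply Subtype.ext
      funext i
      dsimp only
      exact Fin.snoc_castSucc _ _ _ }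
  constructor
  · rw [← Fintype.card_coe L, ← Fintype.card_coe Jset]
    exact Fintype.card_congr equivF
  · intro φ
    set f : {x // x ∈ L} → Fin (2*n) → ℕ := fun l i => l.1 (Fin.castSucc i) with hf
    set g : {x // x ∈ L} → Fin (2*n) → ℕ := fun m => (φ m).1 with hg
    have hginj : Function.Injective g := by
      intro a b h
      exact φ.injective (Subtype.ext h)
    let σ0 : Equiv.Perm {x // x ∈ L} := φ.trans equivF.symm
    have hfg : ∀ m, f (σ0 m) = g m := by
      intro m
      have : equivF (σ0 m) = φ m := Equiv.apply_symm_apply equivF (φ m)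
      have h2 : (equivF (σ0 m)).1 = (φ m).1 := congrArg Subtype.val this
      exact h2
    have hdet := det_pow_matrix_ne_zero f g hginj σ0 hfg
    have hmat : (Matrix.of (fun l m : {x // x ∈ L} =>
        (RatFunc.X : RatFunc ℚ) ^
          (∑ i : Fin (2*n), (l : Fin (2*n+1) → ℕ) (Fin.castSucc i) * ((φ m : Fin (2*n) → ℕ) i))))
        = (Matrix.of fun l m : {x // x ∈ L} =>
            (Polynomial.X : Polynomial ℚ) ^ (ipnat (f l) (g m))).map
              (algebraMap (Polynomial ℚ) (RatFunc ℚ)) := by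
      ext l m
      simp only [Matrix.map_apply, Matrix.of_apply, map_pow, RatFunc.algebraMap_X]
      rfl
    rw [hmat, ← RingHom.mapMatrix_apply, ← RingHom.map_det]
    exact RatFunc.algebraMap_ne_zero hdet
end

section
/- Let U(∞) be the quantum group of gl_∞ over ℚ(v), with generators E_i, F_i (i∈ℤ), K_j^{±1} (j∈ℤ) and the standard relations. For n ≥ 0 let J(n) be the two-sided ideal of U(∞) generated by all E_i, F_i with i ∈ (−∞,−n) ∪ [n,∞). Then J(n) = J(0) for all n ≥ 0; i.e. the two-sided ideal generated by the E_i, F_i with |i| large already contains all E_j, F_j. -/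
open scoped BigOperators Classical

noncomputable section

/-- `v ∈ ℚ(v)`. -/
def qv : RatFunc ℚ := RatFunc.X

/-- The defining relations of the quantum group `U_v(gl_∞)` over `ℚ(v)`, for a family
of elements `E i, F i, K i, K i ⁻¹ = Kinv i` (`i ∈ ℤ`) of a `ℚ(v)`-algebra `U`. -/
def UqRel (U : Type*) [Ring U] [Algebra (RatFunc ℚ) U]
    (E F K Kinv : ℤ → U) : Prop :=
  (∀ i j : ℤ, K i * K j = K j * K i) ∧
  (∀ i : ℤ, K i * Kinv i = 1 ∧ Kinv i * K i = 1) ∧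
  (∀ i j : ℤ, K i * E j =
    (qv ^ (((if i = j then 1 else 0) - (if i = j + 1 then 1 else 0) : ℤ))) • (E j * K i)) ∧
  (∀ i j : ℤ, K i * F j =
    (qv ^ (((if i = j + 1 then 1 else 0) - (if i = j then 1 else 0) : ℤ))) • (F j * K i)) ∧
  (∀ i j : ℤ, 1 < |i - j| → E i * E j = E j * E i ∧ F i * F j = F j * F i) ∧
  (∀ i j : ℤ, E i * F j - F j * E i =
    if i = j then (qv - qv⁻¹)⁻¹ • (K i * Kinv (i+1) - Kinv i * K (i+1)) else 0) ∧
  (∀ i j : ℤ, |i - j| = 1 →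
    E i * E i * E j - (qv + qv⁻¹) • (E i * E j * E i) + E j * E i * E i = 0) ∧
  (∀ i j : ℤ, |i - j| = 1 →
    F i * F i * F j - (qv + qv⁻¹) • (F i * F j * F i) + F j * F i * F i = 0)


lemma qv_ne_zero : qv ≠ 0 := RatFunc.X_ne_zero

lemma qv_sq_ne_one : qv * qv ≠ 1 := by
  intro h
  have h2 : algebraMap (Polynomial ℚ) (RatFunc ℚ) (Polynomial.X * Polynomial.X) =
      algebraMap (Polynomial ℚ) (RatFunc ℚ) 1 := by
    simpa [map_mul, RatFunc.algebraMap_X, qv] using h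
  have h3 : (Polynomial.X * Polynomial.X : Polynomial ℚ) = 1 :=
    RatFunc.algebraMap_injective ℚ h2
  have := congrArg (Polynomial.eval (2:ℚ)) h3
  norm_num at this

lemma qv_sub_inv_ne_zero : qv - qv⁻¹ ≠ 0 := by
  intro h
  have h1 : qv = qv⁻¹ := sub_eq_zero.mp h
  have h2 := mul_inv_cancel₀ qv_ne_zero
  rw [← h1] at h2
  exact qv_sq_ne_one h2

lemma one_sub_qv_sq_ne_zero : (1 : RatFunc ℚ) - qv ^ 2 ≠ 0 := by
  intro h
  apply qv_sq_ne_one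
  have h1 : (1 : RatFunc ℚ) = qv ^ 2 := sub_eq_zero.mp h
  rw [← sq]
  exact h1.symm

section Helpers

lemma inv_pair {M : Type*} [Monoid M] (p q pi qi : M)
    (hpq : p * q = q * p) (hp1 : p * pi = 1) (hp2 : pi * p = 1)
    (hq1 : q * qi = 1) (hq2 : qi * q = 1) :
    (p * qi) * (pi * q) = 1 ∧ (pi * q) * (p * qi) = 1 := by
  have hqip : qi * p = p * qi := by
    calc qi * p = qi * (p * (q * qi)) := by rw [hq1, mul_one]
    _ = qi * ((p * q) * qi) := by rw [mul_assoc p q qi]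
    _ = qi * ((q * p) * qi) := by rw [hpq]
    _ = (qi * q) * (p * qi) := by rw [mul_assoc q p qi, ← mul_assoc]
    _ = p * qi := by rw [hq2, one_mul]
  have hpiq : pi * q = q * pi := by
    calc pi * q = pi * (q * (p * pi)) := by rw [hp1, mul_one]
    _ = pi * ((q * p) * pi) := by rw [mul_assoc q p pi]
    _ = pi * ((p * q) * pi) := by rw [hpq]
    _ = (pi * p) * (q * pi) := by rw [mul_assoc p q pi, ← mul_assoc]
    _ = q * pi := by rw [hp2, one_mul]
  constructor
  · calc (p * qi) * (pi * q) = p * (qi * (pi * q)) := by rw [mul_assoc]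
    _ = p * (qi * (q * pi)) := by rw [hpiq]
    _ = p * ((qi * q) * pi) := by rw [mul_assoc]
    _ = p * pi := by rw [hq2, one_mul]
    _ = 1 := hp1
  · calc (pi * q) * (p * qi) = pi * (q * (qi * p)) := by rw [mul_assoc, hqip]
    _ = pi * ((q * qi) * p) := by rw [mul_assoc]
    _ = pi * p := by rw [hq1, one_mul]
    _ = 1 := hp2

variable {U : Type*} [Ring U] [Algebra (RatFunc ℚ) U]

lemma kinv_comm (Ki Kiv X : U) (e : ℤ)
    (h : Ki * X = (qv ^ e) • (X * Ki)) (h1 : Ki * Kiv = 1) (h2 : Kiv * Ki = 1) :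
    Kiv * X = (qv ^ (-e)) • (X * Kiv) := by
  have hx : X * Ki = (qv ^ (-e)) • (Ki * X) := by
    rw [h, smul_smul, ← zpow_add₀ qv_ne_zero]
    norm_num
  calc Kiv * X = Kiv * X * (Ki * Kiv) := by rw [h1, mul_one]
  _ = Kiv * (X * Ki) * Kiv := by rw [← mul_assoc, mul_assoc Kiv X Ki]
  _ = Kiv * ((qv ^ (-e)) • (Ki * X)) * Kiv := by rw [hx]
  _ = (qv ^ (-e)) • (Kiv * (Ki * X) * Kiv) := by rw [mul_smul_comm, smul_mul_assoc]
  _ = (qv ^ (-e)) • (X * Kiv) := by rw [← mul_assoc, h2, one_mul]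

lemma pair_comm (P Q X : U) (r s : RatFunc ℚ)
    (hP : P * X = r • (X * P)) (hQ : Q * X = s • (X * Q)) :
    (P * Q) * X = (r * s) • (X * (P * Q)) := by
  calc (P * Q) * X = P * (Q * X) := by rw [mul_assoc]
  _ = P * (s • (X * Q)) := by rw [hQ]
  _ = s • (P * X * Q) := by rw [mul_smul_comm, ← mul_assoc]
  _ = s • ((r • (X * P)) * Q) := by rw [hP]
  _ = (s * r) • (X * P * Q) := by rw [smul_mul_assoc, smul_smul]
  _ = (r * s) • (X * (P * Q)) := by rw [mul_comm s r, mul_assoc]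

lemma cl_mul (S : Set U) (hS : ∀ x ∈ S, ∀ c d : U, c * x * d ∈ S) :
    ∀ u ∈ AddSubgroup.closure S, ∀ c d : U, c * u * d ∈ AddSubgroup.closure S := by
  intro u hu c d
  let f : U →+ U := AddMonoidHom.mk' (fun u => c * u * d)
    (by intro x y; simp [mul_add, add_mul])
  have hle : AddSubgroup.closure S ≤ (AddSubgroup.closure S).comap f :=
    (AddSubgroup.closure_le _).mpr
      (fun x hx => AddSubgroup.subset_closure (hS x hx c d))
  exact hle hu

lemma cl_smul (J : AddSubgroup U)
    (hmul : ∀ u ∈ J, ∀ c d : U, c * u * d ∈ J)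
    (r : RatFunc ℚ) (u : U) (hu : u ∈ J) : r • u ∈ J := by
  have := hmul u hu (algebraMap (RatFunc ℚ) U r) 1
  rwa [mul_one, ← Algebra.smul_def] at this

lemma cl_cancel (J : AddSubgroup U)
    (hmul : ∀ u ∈ J, ∀ c d : U, c * u * d ∈ J)
    (r : RatFunc ℚ) (hr : r ≠ 0) (u : U) (hu : r • u ∈ J) : u ∈ J := by
  have := cl_smul J hmul r⁻¹ _ hu
  rwa [smul_smul, inv_mul_cancel₀ hr, one_smul] at this

lemma key (J : AddSubgroup U)
    (hmul : ∀ u ∈ J, ∀ c d : U, c * u * d ∈ J)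
    (A B X : U) (hBA : B * A = 1)
    (hA : A * X = qv⁻¹ • (X * A)) (hB : B * X = qv • (X * B))
    (hT : A - B ∈ J) : X ∈ J := by
  have h1 : qv • ((A - B) * X) - X * (A - B) ∈ J := by
    apply J.sub_mem
    · exact cl_smul J hmul qv _ (by simpa using hmul _ hT 1 X)
    · simpa using hmul _ hT X 1
  have h2 : qv • ((A - B) * X) - X * (A - B) = (1 - qv ^ 2) • (X * B) := by
    rw [sub_mul, mul_sub, hA, hB, smul_sub, smul_smul, smul_smul,
      mul_inv_cancel₀ qv_ne_zero, one_smul, sub_smul, one_smul, sq]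
    abel
  rw [h2] at h1
  have h3 : X * B ∈ J := cl_cancel J hmul _ one_sub_qv_sq_ne_zero _ h1
  have h4 := hmul _ h3 1 A
  rwa [one_mul, mul_assoc, hBA, mul_one] at h4

end Helpers

lemma step_down {U : Type*} [Ring U] [Algebra (RatFunc ℚ) U]
    (E F K Kinv : ℤ → U) (hrel : UqRel U E F K Kinv)
    (J : AddSubgroup U) (hmul : ∀ u ∈ J, ∀ c d : U, c * u * d ∈ J)
    (m : ℤ) (hE : E m ∈ J) (hF : F m ∈ J) :
    E (m - 1) ∈ J ∧ F (m - 1) ∈ J := by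
  obtain ⟨hK, hKi, hKE, hKF, -, hEFc, -, -⟩ := hrel
  obtain ⟨hAB, hBA⟩ := inv_pair (K m) (K (m+1)) (Kinv m) (Kinv (m+1)) (hK m (m+1))
      (hKi m).1 (hKi m).2 (hKi (m+1)).1 (hKi (m+1)).2
  -- T = A - B ∈ J
  have hT : K m * Kinv (m+1) - Kinv m * K (m+1) ∈ J := by
    have h1 : E m * F m - F m * E m ∈ J := by
      apply J.sub_mem
      · simpa using hmul _ hE 1 (F m)
      · simpa using hmul _ hF 1 (E m)
    have h2 := hEFc m m
    rw [if_pos rfl] at h2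
    rw [h2] at h1
    exact cl_cancel J hmul _ (inv_ne_zero qv_sub_inv_ne_zero) _ h1
  -- commutation relations with E (m-1)
  have e1 : K m * E (m-1) = (qv ^ (-1 : ℤ)) • (E (m-1) * K m) := by
    have h := hKE m (m-1)
    rw [if_neg (by omega), if_pos (by omega)] at h
    simpa using h
  have e2 : K (m+1) * E (m-1) = (qv ^ (0 : ℤ)) • (E (m-1) * K (m+1)) := by
    have h := hKE (m+1) (m-1)
    rw [if_neg (by omega), if_neg (by omega)] at h
    simpa using h
  have e1' : Kinv m * E (m-1) = (qv ^ (1 : ℤ)) • (E (m-1) * Kinv m) := by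
    simpa using kinv_comm (K m) (Kinv m) (E (m-1)) (-1) e1 (hKi m).1 (hKi m).2
  have e2' : Kinv (m+1) * E (m-1) = (qv ^ (0 : ℤ)) • (E (m-1) * Kinv (m+1)) := by
    simpa using kinv_comm (K (m+1)) (Kinv (m+1)) (E (m-1)) 0 e2 (hKi (m+1)).1 (hKi (m+1)).2
  have hAE : (K m * Kinv (m+1)) * E (m-1) = qv⁻¹ • (E (m-1) * (K m * Kinv (m+1))) := by
    have := pair_comm (K m) (Kinv (m+1)) (E (m-1)) _ _ e1 e2'
    simpa [zpow_neg, zpow_one] using this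
  have hBE : (Kinv m * K (m+1)) * E (m-1) = qv • (E (m-1) * (Kinv m * K (m+1))) := by
    have := pair_comm (Kinv m) (K (m+1)) (E (m-1)) _ _ e1' e2
    simpa using this
  have hEJ : E (m-1) ∈ J := key J hmul _ _ _ hBA hAE hBE hT
  -- commutation relations with F (m-1)
  have f1 : K m * F (m-1) = (qv ^ (1 : ℤ)) • (F (m-1) * K m) := by
    have h := hKF m (m-1)
    rw [if_pos (by omega), if_neg (by omega)] at h
    simpa using h
  have f2 : K (m+1) * F (m-1) = (qv ^ (0 : ℤ)) • (F (m-1) * K (m+1)) := by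
    have h := hKF (m+1) (m-1)
    rw [if_neg (by omega), if_neg (by omega)] at h
    simpa using h
  have f1' : Kinv m * F (m-1) = (qv ^ (-1 : ℤ)) • (F (m-1) * Kinv m) := by
    simpa using kinv_comm (K m) (Kinv m) (F (m-1)) 1 f1 (hKi m).1 (hKi m).2
  have f2' : Kinv (m+1) * F (m-1) = (qv ^ (0 : ℤ)) • (F (m-1) * Kinv (m+1)) := by
    simpa using kinv_comm (K (m+1)) (Kinv (m+1)) (F (m-1)) 0 f2 (hKi (m+1)).1 (hKi (m+1)).2
  have hBF : (Kinv m * K (m+1)) * F (m-1) = qv⁻¹ • (F (m-1) * (Kinv m * K (m+1))) := by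
    have := pair_comm (Kinv m) (K (m+1)) (F (m-1)) _ _ f1' f2
    simpa [zpow_neg, zpow_one] using this
  have hAF : (K m * Kinv (m+1)) * F (m-1) = qv • (F (m-1) * (K m * Kinv (m+1))) := by
    have := pair_comm (K m) (Kinv (m+1)) (F (m-1)) _ _ f1 f2'
    simpa using this
  have hT' : Kinv m * K (m+1) - K m * Kinv (m+1) ∈ J := by
    have := J.neg_mem hT
    rwa [neg_sub] at this
  have hFJ : F (m-1) ∈ J := key J hmul _ _ _ hAB hBF hAF hT'
  exact ⟨hEJ, hFJ⟩

/-- the two-sided ideal `J(n)` of `U(∞)` generated by the `E_i, F_i` with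
`i ∈ (-∞,-n) ∪ [n,∞)` equals `J(0)`, the ideal generated by all `E_i, F_i`. -/
theorem stmt_15 (U : Type*) [Ring U] [Algebra (RatFunc ℚ) U]
    (E F K Kinv : ℤ → U) (hrel : UqRel U E F K Kinv) :
    ∀ n : ℕ,
      AddSubgroup.closure {x : U | ∃ (a b : U) (i : ℤ),
        (i < -(n:ℤ) ∨ (n:ℤ) ≤ i) ∧ (x = a * E i * b ∨ x = a * F i * b)} =
      AddSubgroup.closure {x : U | ∃ (a b : U) (i : ℤ),
        (x = a * E i * b ∨ x = a * F i * b)} := by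
  intro n
  set Sn : Set U := {x : U | ∃ (a b : U) (i : ℤ),
      (i < -(n:ℤ) ∨ (n:ℤ) ≤ i) ∧ (x = a * E i * b ∨ x = a * F i * b)} with hSn
  set J := AddSubgroup.closure Sn with hJ
  have hSclosed : ∀ x ∈ Sn, ∀ c d : U, c * x * d ∈ Sn := by
    rintro x ⟨a, b, i, hi, hx | hx⟩ c d
    · exact ⟨c * a, b * d, i, hi, Or.inl (by rw [hx]; noncomm_ring)⟩
    · exact ⟨c * a, b * d, i, hi, Or.inr (by rw [hx]; noncomm_ring)⟩
  have hmul : ∀ u ∈ J, ∀ c d : U, c * u * d ∈ J := cl_mul Sn hSclosed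
  apply le_antisymm
  · apply AddSubgroup.closure_mono
    rintro x ⟨a, b, i, -, hx⟩
    exact ⟨a, b, i, hx⟩
  · rw [AddSubgroup.closure_le]
    rintro x ⟨a, b, i, hx⟩
    have hgen : ∀ j : ℤ, (j < -(n:ℤ) ∨ (n:ℤ) ≤ j) → E j ∈ J ∧ F j ∈ J := by
      intro j hj
      exact ⟨AddSubgroup.subset_closure ⟨1, 1, j, hj, Or.inl (by rw [one_mul, mul_one])⟩,
        AddSubgroup.subset_closure ⟨1, 1, j, hj, Or.inr (by rw [one_mul, mul_one])⟩⟩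
    have hdown : ∀ k : ℕ, E ((n:ℤ) - k) ∈ J ∧ F ((n:ℤ) - k) ∈ J := by
      intro k
      induction k with
      | zero => simpa using hgen n (Or.inr le_rfl)
      | succ k ih =>
        have h := step_down E F K Kinv hrel J hmul ((n:ℤ) - k) ih.1 ih.2
        have harith : ((n:ℤ) - (k+1:ℕ)) = ((n:ℤ) - k) - 1 := by push_cast; ring
        rw [harith]
        exact h
    have hall : ∀ j : ℤ, E j ∈ J ∧ F j ∈ J := by
      intro j
      rcases le_or_gt (n:ℤ) j with h | h
      · exact hgen j (Or.inr h)
      · have hk : (n:ℤ) - ((n:ℤ) - j).toNat = j := by omega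
        have := hdown ((n:ℤ) - j).toNat
        rwa [hk] at this
    rcases hx with hx | hx <;> rw [hx]
    · exact hmul _ (hall i).1 a b
    · exact hmul _ (hall i).2 a b
end
end
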